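/- arXiv:quant-ph/0309104 — 2 statements merged into one kernel-verified Lean document; each statement's English description precedes it below -/
import Mathlib

section
/- Let n be odd, N = 2^n, and v ∈ SU(N). Then vᵀ S v = S if and only if the matrix w = F₀ᵀ v F₀ satisfies wᵀ Σ w = Σ; that is, conjugation by the standard finagler identifies the symmetry group {v ∈ SU(N) : vᵀSv = S} of the concurrence form with the standard symplectic group Sp(N/2) = {w ∈ SU(N) : wᵀΣw = Σ}. -/
open Matrix Complex

noncomputable section

/-- Number of ones in the binary expansion of `j`. -/
def popCnt (j : ℕ) : ℕ := (Nat.digits 2 j).sum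

/-- The `N × N` matrix `S = (-iσ^y) ⊗ ⋯ ⊗ (-iσ^y)` (`n` factors), `N = 2^n`;
equivalently `S |j⟩ = (-1)^{#j} |N-1-j⟩`. -/
def Smat (n : ℕ) : Matrix (Fin (2 ^ n)) (Fin (2 ^ n)) ℂ :=
  fun k j => if (k : ℕ) + (j : ℕ) = 2 ^ n - 1 then (-1 : ℂ) ^ popCnt (j : ℕ) else 0

/-- The standard entangler `E₀` (for `n` even):
`E₀ = (1/√2) Σ_{j<N/2} ( |j⟩⟨2j| + i|j⟩⟨2j+1| + (-1)^{#j}(|N-j-1⟩⟨2j| - i|N-j-1⟩⟨2j+1|) )`. -/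
def E0 (n : ℕ) : Matrix (Fin (2 ^ n)) (Fin (2 ^ n)) ℂ :=
  fun r c =>
    (Real.sqrt 2 : ℂ)⁻¹ *
      (if (r : ℕ) < 2 ^ n / 2 then
        (if (c : ℕ) = 2 * (r : ℕ) then 1
         else if (c : ℕ) = 2 * (r : ℕ) + 1 then Complex.I else 0)
      else
        (if (c : ℕ) = 2 * (2 ^ n - 1 - (r : ℕ)) then
            (-1 : ℂ) ^ popCnt (2 ^ n - 1 - (r : ℕ))
         else if (c : ℕ) = 2 * (2 ^ n - 1 - (r : ℕ)) + 1 then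
            -Complex.I * (-1 : ℂ) ^ popCnt (2 ^ n - 1 - (r : ℕ))
         else 0))

/-- `Σ = Σ_{j<N/2} ( |j⟩⟨N/2+j| - |N/2+j⟩⟨j| )`. -/
def SigmaMat (n : ℕ) : Matrix (Fin (2 ^ n)) (Fin (2 ^ n)) ℂ :=
  fun r c =>
    if (c : ℕ) = (r : ℕ) + 2 ^ n / 2 then 1
    else if (r : ℕ) = (c : ℕ) + 2 ^ n / 2 then -1 else 0

/-- The standard finagler `F₀` (for `n` odd):
`F₀ = (1/√2) Σ_{j<N/2} ( |j⟩⟨j| + |N-j-1⟩⟨j| + (-1)^{#j}(|j⟩⟨N/2+j| - |N-j-1⟩⟨N/2+j|) )`. -/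
def F0 (n : ℕ) : Matrix (Fin (2 ^ n)) (Fin (2 ^ n)) ℂ :=
  fun r c =>
    (Real.sqrt 2 : ℂ)⁻¹ *
      (if (r : ℕ) < 2 ^ n / 2 then
        (if (c : ℕ) = (r : ℕ) then 1
         else if (c : ℕ) = (r : ℕ) + 2 ^ n / 2 then (-1 : ℂ) ^ popCnt (r : ℕ) else 0)
      else
        (if (c : ℕ) = 2 ^ n - 1 - (r : ℕ) then 1
         else if (c : ℕ) = (2 ^ n - 1 - (r : ℕ)) + 2 ^ n / 2 then
            -(-1 : ℂ) ^ popCnt (2 ^ n - 1 - (r : ℕ))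
         else 0))

/-- The concurrence capacity `κ(v) = sup { |(vψ)ᵀ S (vψ)| : ‖ψ‖ = 1, ψᵀSψ = 0 }`. -/
def kappa (n : ℕ) (v : Matrix (Fin (2 ^ n)) (Fin (2 ^ n)) ℂ) : ℝ :=
  sSup { r : ℝ | ∃ ψ : Fin (2 ^ n) → ℂ,
    star ψ ⬝ᵥ ψ = 1 ∧ ψ ⬝ᵥ ((Smat n) *ᵥ ψ) = 0 ∧
    r = ‖(v *ᵥ ψ) ⬝ᵥ ((Smat n) *ᵥ (v *ᵥ ψ))‖ }


/-! `F₀` is a real orthogonal matrix with `F₀ᵀ S F₀ = Σ`, so for `w = F₀ᵀ v F₀` we get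
`wᵀ Σ w = F₀ᵀ (vᵀ S v) F₀`, and congruence by the invertible `F₀` is injective. Both matrix
identities are checked one column at a time: column `c` of `F₀` is supported on the two rows
`j` and `N - 1 - j`, where `j = c mod N/2`, with equal entries if `c < N/2` and opposite ones
otherwise. Since `#j + #(N - 1 - j) = n` is odd, `S` pairs these two rows with opposite signs,
which turns the "sum" columns of `F₀` into the "difference" ones and produces `Σ`. -/

theorem Matrix.transpose_mul_mul_eq_iff_of_transpose_mul_self {m R : Type*} [Fintype m]
    [DecidableEq m] [CommRing R] {P : Matrix m m R} (hP : Pᵀ * P = 1) (S v : Matrix m m R) :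
    vᵀ * S * v = S ↔ (Pᵀ * v * P)ᵀ * (Pᵀ * S * P) * (Pᵀ * v * P) = Pᵀ * S * P := by
  have hP' : P * Pᵀ = 1 := mul_eq_one_comm.mp hP
  have hconj : (Pᵀ * v * P)ᵀ * (Pᵀ * S * P) * (Pᵀ * v * P) = Pᵀ * (vᵀ * S * v) * P := by
    simp only [transpose_mul, transpose_transpose, Matrix.mul_assoc]
    simp only [← Matrix.mul_assoc P Pᵀ, hP', Matrix.one_mul]
  have hunconj (X : Matrix m m R) : P * (Pᵀ * X * P) * Pᵀ = X := by
    simp only [← Matrix.mul_assoc, hP', Matrix.one_mul]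
    rw [Matrix.mul_assoc, hP', Matrix.mul_one]
  rw [hconj]
  exact ⟨fun h ↦ by rw [h], fun h ↦ by rw [← hunconj (vᵀ * S * v), h, hunconj]⟩

theorem popCnt_two_mul_add (q : ℕ) {b : ℕ} (hb : b < 2) : popCnt (2 * q + b) = popCnt q + b := by
  rcases Nat.eq_zero_or_pos (2 * q + b) with h | h
  · obtain ⟨rfl, rfl⟩ : q = 0 ∧ b = 0 := by omega
    simp [popCnt]
  · rw [popCnt, Nat.digits_def' one_lt_two h, List.sum_cons, ← popCnt]
    rw [show (2 * q + b) % 2 = b by omega, show (2 * q + b) / 2 = q by omega]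
    omega

theorem popCnt_add_popCnt_two_pow_sub (n : ℕ) {j : ℕ} (hj : j < 2 ^ n) :
    popCnt j + popCnt (2 ^ n - 1 - j) = n := by
  induction n generalizing j with
  | zero =>
    obtain rfl : j = 0 := by omega
    simp [popCnt]
  | succ n ih =>
    have hj' : j / 2 < 2 ^ n := by rw [pow_succ] at hj; omega
    have hlow : popCnt j = popCnt (j / 2) + j % 2 := by
      conv_lhs => rw [← Nat.div_add_mod j 2]
      exact popCnt_two_mul_add _ (Nat.mod_lt _ two_pos)
    have hcompl : 2 ^ (n + 1) - 1 - j = 2 * (2 ^ n - 1 - j / 2) + (1 - j % 2) := by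
      rw [pow_succ]; omega
    rw [hlow, hcompl, popCnt_two_mul_add _ (by omega)]
    have := ih hj'
    omega

theorem neg_one_pow_popCnt_rev {n : ℕ} (hodd : Odd n) (j : Fin (2 ^ n)) :
    (-1 : ℂ) ^ popCnt j.rev = -(-1) ^ popCnt j := by
  have hsum := popCnt_add_popCnt_two_pow_sub n j.isLt
  rw [Fin.val_rev, show 2 ^ n - ((j : ℕ) + 1) = 2 ^ n - 1 - j by omega]
  rw [← mul_right_inj' (pow_ne_zero (popCnt j) (neg_ne_zero.mpr one_ne_zero)), ← pow_add, hsum,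
    hodd.neg_one_pow, mul_neg, ← pow_add, Even.neg_one_pow ⟨_, rfl⟩]

theorem Smat_mul_apply {n : ℕ} (M : Matrix (Fin (2 ^ n)) (Fin (2 ^ n)) ℂ) (r d : Fin (2 ^ n)) :
    (Smat n * M) r d = (-1) ^ popCnt r.rev * M r.rev d := by
  rw [mul_apply, Fintype.sum_eq_single r.rev]
  · simp only [Smat, Fin.val_rev]
    rw [if_pos (by omega)]
  · intro k hk
    simp only [Smat]
    rw [if_neg, zero_mul]
    exact fun h ↦ hk (Fin.ext (by rw [Fin.val_rev]; omega))

theorem neg_one_pow_mul_self {R : Type*} [Monoid R] [HasDistribNeg R] (k : ℕ) :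
    (-1 : R) ^ k * (-1) ^ k = 1 := by
  rw [← pow_add, Even.neg_one_pow ⟨k, rfl⟩]

theorem inv_sqrt_two_mul_inv_sqrt_two : (√2 : ℂ)⁻¹ * (√2 : ℂ)⁻¹ = 2⁻¹ := by
  rw [← mul_inv, ← Complex.ofReal_mul, Real.mul_self_sqrt zero_le_two]
  norm_num

section F0

variable {n : ℕ}

theorem two_mul_two_pow_div_two (hn : n ≠ 0) : 2 * (2 ^ n / 2) = 2 ^ n :=
  Nat.two_mul_div_two_of_even (Nat.even_pow.mpr ⟨even_two, hn⟩)

theorem ne_rev_of_lt_two_pow_div_two {j : Fin (2 ^ n)} (hj : (j : ℕ) < 2 ^ n / 2) : j ≠ j.rev :=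
  fun h ↦ by have := congrArg Fin.val h; rw [Fin.val_rev] at this; omega

theorem F0_of_lt {j : Fin (2 ^ n)} (hj : (j : ℕ) < 2 ^ n / 2) (d : Fin (2 ^ n)) :
    F0 n j d = (√2 : ℂ)⁻¹ * (if (d : ℕ) = j then 1
      else if (d : ℕ) = j + 2 ^ n / 2 then (-1) ^ popCnt j else 0) := by
  rw [F0, if_pos hj]

theorem F0_rev_of_lt {j : Fin (2 ^ n)} (hj : (j : ℕ) < 2 ^ n / 2) (d : Fin (2 ^ n)) :
    F0 n j.rev d = (√2 : ℂ)⁻¹ * (if (d : ℕ) = j then 1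
      else if (d : ℕ) = j + 2 ^ n / 2 then -(-1) ^ popCnt j else 0) := by
  have hrev : 2 ^ n - 1 - (j.rev : ℕ) = j := by rw [Fin.val_rev]; omega
  rw [F0, if_neg (by rw [Fin.val_rev]; omega), hrev]

theorem inv_sqrt_two_mul_F0_add_F0_rev {j : Fin (2 ^ n)} (hj : (j : ℕ) < 2 ^ n / 2)
    (d : Fin (2 ^ n)) :
    (√2 : ℂ)⁻¹ * (F0 n j d + F0 n j.rev d) = if d = j then 1 else 0 := by
  simp only [F0_of_lt hj, F0_rev_of_lt hj, Fin.ext_iff]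
  split_ifs <;> first | omega | ring1 | linear_combination 2 * inv_sqrt_two_mul_inv_sqrt_two

theorem inv_sqrt_two_mul_F0_sub_F0_rev {j : Fin (2 ^ n)} (hj : (j : ℕ) < 2 ^ n / 2)
    (d : Fin (2 ^ n)) :
    (√2 : ℂ)⁻¹ * (F0 n j d - F0 n j.rev d) =
      if (d : ℕ) = j + 2 ^ n / 2 then (-1) ^ popCnt j else 0 := by
  rw [F0_of_lt hj, F0_rev_of_lt hj]
  split_ifs <;> first
    | omega
    | ring1
    | linear_combination 2 * (-1 : ℂ) ^ popCnt j * inv_sqrt_two_mul_inv_sqrt_two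

theorem sum_F0_mul_of_lt {c : Fin (2 ^ n)} (hc : (c : ℕ) < 2 ^ n / 2) (g : Fin (2 ^ n) → ℂ) :
    ∑ r, F0 n r c * g r = (√2 : ℂ)⁻¹ * (g c + g c.rev) := by
  rw [Fintype.sum_eq_add c c.rev (ne_rev_of_lt_two_pow_div_two hc)]
  · rw [F0_of_lt hc, F0_rev_of_lt hc]
    simp only [if_true]
    ring
  · rintro r ⟨hrc, hrc'⟩
    have h1 : (r : ℕ) ≠ c := fun h ↦ hrc (Fin.ext h)
    have h2 : (r : ℕ) ≠ 2 ^ n - 1 - c := fun h ↦ hrc' (Fin.ext (by rw [Fin.val_rev]; omega))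
    have := r.isLt
    simp only [F0]
    split_ifs <;> first | omega | ring

theorem sum_F0_mul_of_eq_add {j c : Fin (2 ^ n)} (hj : (j : ℕ) < 2 ^ n / 2)
    (hc : (c : ℕ) = j + 2 ^ n / 2) (g : Fin (2 ^ n) → ℂ) :
    ∑ r, F0 n r c * g r = (√2 : ℂ)⁻¹ * (-1) ^ popCnt j * (g j - g j.rev) := by
  have hN := two_mul_two_pow_div_two (n := n) (by rintro rfl; simp at hj)
  rw [Fintype.sum_eq_add j j.rev (ne_rev_of_lt_two_pow_div_two hj)]
  · rw [F0_of_lt hj, F0_rev_of_lt hj]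
    simp only [hc, if_true, show (j : ℕ) + 2 ^ n / 2 ≠ j by omega, if_false]
    ring
  · rintro r ⟨hrj, hrj'⟩
    have h1 : (r : ℕ) ≠ j := fun h ↦ hrj (Fin.ext h)
    have h2 : (r : ℕ) ≠ 2 ^ n - 1 - j := fun h ↦ hrj' (Fin.ext (by rw [Fin.val_rev]; omega))
    have := r.isLt
    simp only [F0]
    split_ifs <;> first | omega | ring

theorem lt_or_exists_eq_add_of_ne_zero (hn : n ≠ 0) (c : Fin (2 ^ n)) :
    (c : ℕ) < 2 ^ n / 2 ∨
      ∃ j : Fin (2 ^ n), (j : ℕ) < 2 ^ n / 2 ∧ (c : ℕ) = j + 2 ^ n / 2 := by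
  have hN := two_mul_two_pow_div_two hn
  by_cases hc : (c : ℕ) < 2 ^ n / 2
  · exact .inl hc
  · exact .inr ⟨⟨c - 2 ^ n / 2, by omega⟩, by simp only; omega, by simp only; omega⟩

theorem F0_transpose_mul_self (hn : n ≠ 0) : (F0 n)ᵀ * F0 n = 1 := by
  ext c d
  simp only [mul_apply, transpose_apply, one_apply]
  rcases lt_or_exists_eq_add_of_ne_zero hn c with hc | ⟨j, hj, hc⟩
  · rw [sum_F0_mul_of_lt hc, inv_sqrt_two_mul_F0_add_F0_rev hc]
    simp only [eq_comm]
  · have hsub := inv_sqrt_two_mul_F0_sub_F0_rev hj d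
    rw [sum_F0_mul_of_eq_add hj hc]
    simp only [Fin.ext_iff, hc]
    split_ifs at hsub ⊢ <;> first
      | omega
      | linear_combination (-1 : ℂ) ^ popCnt j * hsub
      | linear_combination (-1 : ℂ) ^ popCnt j * hsub + neg_one_pow_mul_self (R := ℂ) (popCnt j)

theorem F0_transpose_mul_Smat_mul_F0 (hodd : Odd n) :
    (F0 n)ᵀ * Smat n * F0 n = SigmaMat n := by
  have hn : n ≠ 0 := hodd.pos.ne'
  ext c d
  simp only [Matrix.mul_assoc, mul_apply (M := (F0 n)ᵀ), transpose_apply, Smat_mul_apply,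
    SigmaMat]
  rcases lt_or_exists_eq_add_of_ne_zero hn c with hc | ⟨j, hj, hc⟩
  · have hsub := inv_sqrt_two_mul_F0_sub_F0_rev hc d
    rw [sum_F0_mul_of_lt hc]
    simp only [Fin.rev_rev, neg_one_pow_popCnt_rev hodd]
    split_ifs at hsub ⊢ <;> first
      | omega
      | linear_combination (-1 : ℂ) ^ popCnt c * hsub
      | linear_combination (-1 : ℂ) ^ popCnt c * hsub + neg_one_pow_mul_self (R := ℂ) (popCnt c)
  · have hadd := inv_sqrt_two_mul_F0_add_F0_rev hj d
    have hN := two_mul_two_pow_div_two hn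
    have := d.isLt
    rw [sum_F0_mul_of_eq_add hj hc, hc]
    simp only [Fin.rev_rev, neg_one_pow_popCnt_rev hodd]
    simp only [Fin.ext_iff] at hadd
    split_ifs at hadd ⊢ <;> first
      | omega
      | linear_combination -hadd -
          (√2 : ℂ)⁻¹ * (F0 n j d + F0 n j.rev d) * neg_one_pow_mul_self (R := ℂ) (popCnt j)

end F0

theorem K_is_Sp_general (n : ℕ) (hodd : Odd n)
    (v : Matrix (Fin (2 ^ n)) (Fin (2 ^ n)) ℂ) :
    (vᵀ * Smat n * v = Smat n) ↔
      ((F0 n)ᵀ * v * F0 n)ᵀ * SigmaMat n * ((F0 n)ᵀ * v * F0 n) = SigmaMat n := by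
  rw [← F0_transpose_mul_Smat_mul_F0 hodd]
  exact transpose_mul_mul_eq_iff_of_transpose_mul_self
    (F0_transpose_mul_self hodd.pos.ne') _ _

/-- **`K ≅ Sp(N/2)` for an odd number of qubits.** For `n` odd and `v ∈ SU(2^n)`:
`vᵀ S v = S` iff `w = F₀ᵀ v F₀` satisfies `wᵀ Σ w = Σ`; conjugation by the standard
finagler identifies the symmetry group of the concurrence form with `Sp(N/2)`. -/
theorem K_is_Sp (n : ℕ) (hn : 1 ≤ n) (hodd : Odd n)
    (v : Matrix (Fin (2 ^ n)) (Fin (2 ^ n)) ℂ)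
    (hv : v ∈ Matrix.unitaryGroup (Fin (2 ^ n)) ℂ) (hvdet : v.det = 1) :
    (vᵀ * Smat n * v = Smat n) ↔
      ((F0 n)ᵀ * v * F0 n)ᵀ * SigmaMat n * ((F0 n)ᵀ * v * F0 n) = SigmaMat n :=
  K_is_Sp_general n hodd v
end
end

section
/- Let n be even and N = 2^n. A matrix E ∈ SU(N) satisfies E · conj(E† X E) · E† = S X̄ S for every X ∈ su(N) (i.e., E is an entangler, intertwining the Cartan involution X ↦ X̄ with the involution θ(X) = S⁻¹ X̄ S; note S⁻¹ = S for n even) if and only if E Eᵀ = ξ S for some ξ ∈ ℂ with ξ^N = 1. -/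
open Matrix Complex

noncomputable section

/-!
Write `M = E Eᵀ`. Then `E · conj(E† X E) · E† = M X̄ M̄`, and `M̄ M = 1` for unitary `E`.
Skew-Hermitian traceless matrices span every off-diagonal matrix unit over `ℂ`, so the entangler
condition says that `S M` commutes with all of them, hence is a scalar `ξ`; thus `M = ξ S`
(`S² = 1` for even `n`) and `1 = det M = ξ^N det S = ξ^N`. Conversely `ξ^N = 1` forces
`|ξ| = 1`, and `M X̄ M̄ = |ξ|² S X̄ S`. The facts `S² = (-1)ⁿ` and `det S = 1` come from
`S_{n+1} = S_n ⊗ (-iσ^y)`.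
-/

open scoped Kronecker

lemma popCnt_eq_mod_add_div (m : ℕ) : popCnt m = m % 2 + popCnt (m / 2) := by
  rcases Nat.eq_zero_or_pos m with rfl | hm
  · simp [popCnt]
  · rw [popCnt, Nat.digits_def' one_lt_two hm, List.sum_cons]; rfl

def negIPauliY : Matrix (Fin 2) (Fin 2) ℂ := !![0, -1; 1, 0]

lemma negIPauliY_mul_self : negIPauliY * negIPauliY = (-1 : ℂ) • 1 := by
  ext i j; fin_cases i <;> fin_cases j <;> simp [negIPauliY]

lemma det_negIPauliY : negIPauliY.det = 1 := by
  simp [negIPauliY, det_fin_two_of]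

/-- The last qubit is the least significant bit: `(b, a) ↦ 2 b + a`. -/
def qubitSplit (n : ℕ) : Fin (2 ^ n) × Fin 2 ≃ Fin (2 ^ (n + 1)) :=
  finProdFinEquiv.trans (finCongr (pow_succ 2 n).symm)

lemma qubitSplit_val (n : ℕ) (p : Fin (2 ^ n) × Fin 2) :
    (qubitSplit n p : ℕ) = p.2 + 2 * p.1 := rfl

lemma Smat_qubitSplit (n : ℕ) (b d : Fin (2 ^ n)) (a c : Fin 2) :
    Smat (n + 1) (qubitSplit n (b, a)) (qubitSplit n (d, c)) = Smat n b d * negIPauliY a c := by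
  have hcond : (a + 2 * b : ℕ) + (c + 2 * d) = 2 ^ (n + 1) - 1 ↔
      (a : ℕ) + c = 1 ∧ (b : ℕ) + d = 2 ^ n - 1 := by
    have := a.isLt; have := c.isLt; have := Nat.one_le_two_pow (n := n)
    rw [pow_succ]; omega
  have hmod : ((c : ℕ) + 2 * d) % 2 = c := by have := c.isLt; omega
  have hdiv : ((c : ℕ) + 2 * d) / 2 = d := by have := c.isLt; omega
  simp only [Smat, qubitSplit_val, hcond, popCnt_eq_mod_add_div ((c : ℕ) + 2 * d), hmod, hdiv]
  by_cases hbd : (b : ℕ) + d = 2 ^ n - 1 <;> fin_cases a <;> fin_cases c <;>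
    simp [negIPauliY, hbd, pow_add]

lemma Smat_succ (n : ℕ) :
    Smat (n + 1) = reindexAlgEquiv ℂ ℂ (qubitSplit n) (Smat n ⊗ₖ negIPauliY) := by
  ext k j
  obtain ⟨⟨b, a⟩, rfl⟩ := (qubitSplit n).surjective k
  obtain ⟨⟨d, c⟩, rfl⟩ := (qubitSplit n).surjective j
  simp [Smat_qubitSplit]

lemma Smat_zero : Smat 0 = 1 := by
  ext k j
  fin_cases k; fin_cases j
  simp [Smat, popCnt]

lemma Smat_mul_self (n : ℕ) : Smat n * Smat n = (-1 : ℂ) ^ n • 1 := by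
  induction n with
  | zero => simp [Smat_zero]
  | succ n ih =>
    rw [Smat_succ, ← map_mul, ← mul_kronecker_mul, ih, negIPauliY_mul_self, smul_kronecker,
      kronecker_smul, one_kronecker_one, map_smul, map_smul, map_one, smul_smul, ← pow_succ]

lemma det_Smat (n : ℕ) : (Smat n).det = 1 := by
  induction n with
  | zero => simp [Smat_zero]
  | succ n ih => simp [Smat_succ, det_kronecker, ih, det_negIPauliY]

lemma Smat_map_conj (n : ℕ) : (Smat n).map (starRingEnd ℂ) = Smat n := by
  ext k j
  simp only [map_apply, Smat]
  split_ifs <;> simp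

section Conjugation

variable {m n : Type*} {R : Type*} [CommRing R] [StarRing R]

lemma conjTranspose_map_conj (E : Matrix m n R) : Eᴴ.map (starRingEnd R) = Eᵀ := by
  ext i j; simp [starRingEnd_apply]

lemma transpose_map_conj (E : Matrix m n R) : Eᵀ.map (starRingEnd R) = Eᴴ := rfl

lemma map_conj_eq_conjTranspose_transpose (E : Matrix m n R) :
    E.map (starRingEnd R) = Eᴴᵀ := rfl

variable [Fintype m] [Fintype n]

lemma mul_map_conj_mul_conjTranspose (E : Matrix m n R) (X : Matrix m m R) :
    E * (Eᴴ * X * E).map (starRingEnd R) * Eᴴ =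
      E * Eᵀ * X.map (starRingEnd R) * (E * Eᵀ).map (starRingEnd R) := by
  simp only [Matrix.map_mul, conjTranspose_map_conj, transpose_map_conj, Matrix.mul_assoc]

variable [DecidableEq n]

lemma map_conj_mul_transpose_mul_self {E : Matrix n n R} (hE : E ∈ unitaryGroup n R) :
    (E * Eᵀ).map (starRingEnd R) * (E * Eᵀ) = 1 := by
  have hEE : Eᴴ * E = 1 := mem_unitaryGroup_iff'.mp hE
  have hEE' : E * Eᴴ = 1 := mem_unitaryGroup_iff.mp hE
  calc (E * Eᵀ).map (starRingEnd R) * (E * Eᵀ) = Eᴴᵀ * (Eᴴ * E) * Eᵀ := by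
        rw [Matrix.map_mul, map_conj_eq_conjTranspose_transpose E, transpose_map_conj]
        simp only [Matrix.mul_assoc]
    _ = (E * Eᴴ)ᵀ := by rw [hEE, Matrix.mul_one, transpose_mul]
    _ = 1 := by rw [hEE', transpose_one]

end Conjugation

section SingleCommute

variable {n : Type*} [Fintype n] [DecidableEq n]

lemma exists_eq_smul_of_mul_single_mul_eq {R : Type*} [CommSemiring R] {M M' S : Matrix n n R}
    (hM : M' * M = 1) (hS : S * S = 1)
    (h : ∀ k l : n, k ≠ l → M * single k l 1 * M' = S * single k l 1 * S) :
    ∃ c : R, M = c • S := by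
  have hcomm : Pairwise fun k l : n => Commute (single k l 1) (S * M) := by
    intro k l hkl
    calc single k l 1 * (S * M) = S * (S * single k l 1 * S) * M := by
          simp only [← Matrix.mul_assoc, hS, Matrix.one_mul]
      _ = S * (M * single k l 1 * M') * M := by rw [h k l hkl]
      _ = S * M * single k l 1 := by simp only [Matrix.mul_assoc, hM, Matrix.mul_one]
  obtain ⟨c, hc⟩ := mem_range_scalar_of_commute_single hcomm
  refine ⟨c, ?_⟩
  calc M = S * (S * M) := by rw [← Matrix.mul_assoc, hS, Matrix.one_mul]
    _ = c • S := by rw [← hc, scalar_apply, smul_eq_mul_diagonal]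

lemma mul_single_mul_eq_of_forall_skewHermitian {A B C D : Matrix n n ℂ}
    (h : ∀ X : Matrix n n ℂ, Xᴴ = -X → X.trace = 0 →
      A * X.map (starRingEnd ℂ) * B = C * X.map (starRingEnd ℂ) * D)
    {k l : n} (hkl : k ≠ l) :
    A * single k l 1 * B = C * single k l 1 * D := by
  have htr : ∀ a b : ℂ, (single k l a + single l k b).trace = 0 := fun a b => by
    rw [trace_add, trace_single_eq_of_ne k l a hkl, trace_single_eq_of_ne l k b hkl.symm, add_zero]
  have hmap : ∀ a b : ℂ, (single k l a + single l k b).map (starRingEnd ℂ) =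
      single k l (starRingEnd ℂ a) + single l k (starRingEnd ℂ b) := fun a b => by
    simp [Matrix.map_add _ (map_add (starRingEnd ℂ))]
  have h₁ : A * (single k l 1 + single l k (-1)) * B =
      C * (single k l 1 + single l k (-1)) * D := by
    simpa [hmap] using h _ (by simp [single_neg]) (htr 1 (-1))
  have h₂ : A * (single k l (-I) + single l k (-I)) * B =
      C * (single k l (-I) + single l k (-I)) * D := by
    simpa [hmap] using h (single k l I + single l k I) (by simp [single_neg, add_comm]) (htr I I)
  have hsingle : ∀ (i j : n) (c : ℂ), single i j c = c • single i j 1 := fun i j c => by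
    rw [smul_single, smul_eq_mul, mul_one]
  have hexpand : ∀ P Q : Matrix n n ℂ, (2 : ℂ) • (P * single k l 1 * Q) =
      P * (single k l 1 + single l k (-1)) * Q +
        I • (P * (single k l (-I) + single l k (-I)) * Q) := fun P Q => by
    rw [hsingle k l (-I), hsingle l k (-I), hsingle l k (-1)]
    simp only [Matrix.mul_add, Matrix.add_mul, Matrix.mul_smul, Matrix.smul_mul]
    match_scalars <;> norm_num
  apply smul_right_injective _ (two_ne_zero' ℂ)
  simp only [hexpand, h₁, h₂]

end SingleCommute

theorem entangler_iff_general (n : ℕ) (hev : Even n)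
    (E : Matrix (Fin (2 ^ n)) (Fin (2 ^ n)) ℂ)
    (hE : E ∈ Matrix.unitaryGroup (Fin (2 ^ n)) ℂ) (hEdet : E.det = 1) :
    (∀ X : Matrix (Fin (2 ^ n)) (Fin (2 ^ n)) ℂ, Xᴴ = -X → X.trace = 0 →
        E * ((Eᴴ * X * E).map (starRingEnd ℂ)) * Eᴴ =
          Smat n * (X.map (starRingEnd ℂ)) * Smat n) ↔
      (∃ ξ : ℂ, ξ ^ (2 ^ n) = 1 ∧ E * Eᵀ = ξ • Smat n) := by
  have hSS : Smat n * Smat n = 1 := by rw [Smat_mul_self, hev.neg_one_pow, one_smul]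
  simp only [mul_map_conj_mul_conjTranspose]
  constructor
  · intro h
    obtain ⟨ξ, hξ⟩ := exists_eq_smul_of_mul_single_mul_eq (map_conj_mul_transpose_mul_self hE)
      hSS fun _ _ hkl => mul_single_mul_eq_of_forall_skewHermitian h hkl
    refine ⟨ξ, ?_, hξ⟩
    simpa [hEdet, det_smul, det_Smat] using (congrArg det hξ).symm
  · rintro ⟨ξ, hξ, hM⟩ X - -
    have hnorm : ‖ξ‖ = 1 := norm_eq_one_of_pow_eq_one hξ (by positivity)
    rw [hM, Matrix.map_smul' _ _ _ (map_mul _), Smat_map_conj]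
    simp only [Matrix.smul_mul, Matrix.mul_smul, smul_smul, conj_mul', hnorm,
      ofReal_one, one_pow, one_smul]

/-- **Characterization of entanglers** (for `n` even): `E ∈ SU(2^n)` intertwines the
Cartan involution `X ↦ X̄` with `θ(X) = S X̄ S` (note `S⁻¹ = S` for `n` even) iff
`E Eᵀ = ξ S` for some `N`-th root of unity `ξ`. -/
theorem entangler_iff (n : ℕ) (hn : 1 ≤ n) (hev : Even n)
    (E : Matrix (Fin (2 ^ n)) (Fin (2 ^ n)) ℂ)
    (hE : E ∈ Matrix.unitaryGroup (Fin (2 ^ n)) ℂ) (hEdet : E.det = 1) :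
    (∀ X : Matrix (Fin (2 ^ n)) (Fin (2 ^ n)) ℂ, Xᴴ = -X → X.trace = 0 →
        E * ((Eᴴ * X * E).map (starRingEnd ℂ)) * Eᴴ =
          Smat n * (X.map (starRingEnd ℂ)) * Smat n) ↔
      (∃ ξ : ℂ, ξ ^ (2 ^ n) = 1 ∧ E * Eᵀ = ξ • Smat n) :=
  entangler_iff_general n hev E hE hEdet
end
end
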